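/- Let G be a finite simple graph, let z ≥ 0 be an integer, let (C,F) be a z-antler in G, and let X ⊆ C. Then (C \ X, F) is a z-antler in the graph G − X. -/

import Mathlib

variable {V : Type*}

/-- The subgraph of `G` with edges restricted to the vertex set `S`
(kept on the same vertex type; vertices outside `S` become isolated).
Used to model the induced subgraph `G[S]` and vertex deletion `G - X = G[Xᶜ]`. -/
def graphRestrict (G : SimpleGraph V) (S : Set V) : SimpleGraph V where
  Adj u v := G.Adj u v ∧ u ∈ S ∧ v ∈ S
  symm := ⟨fun _ _ h => ⟨h.1.symm, h.2.2, h.2.1⟩⟩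
  loopless := ⟨fun v h => G.loopless.irrefl v h.1⟩

/-- `X` is a feedback vertex set of `G`: deleting `X` leaves an acyclic graph. -/
def IsFVS (G : SimpleGraph V) (X : Set V) : Prop :=
  (graphRestrict G Xᶜ).IsAcyclic

/-- The feedback vertex number of `G`: the minimum size of a feedback vertex set. -/
noncomputable def fvs (G : SimpleGraph V) : ℕ :=
  sInf {n | ∃ X : Set V, IsFVS G X ∧ X.ncard = n}

/-- `X` is a minimum feedback vertex set of `G`. -/
def IsMinFVS (G : SimpleGraph V) (X : Set V) : Prop :=
  IsFVS G X ∧ ∀ Y : Set V, IsFVS G Y → X.ncard ≤ Y.ncard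

/-- `(C, F)` is a feedback vertex cut in `G`: `C` and `F` are disjoint, `G[F]` is a
forest, and every tree of `G[F]` has at most one edge to `V(G) \ (C ∪ F)` (i.e. any two
edges from the same component of `G[F]` to the outside coincide). -/
def IsFVC (G : SimpleGraph V) (C F : Set V) : Prop :=
  Disjoint C F ∧ (graphRestrict G F).IsAcyclic ∧
    ∀ u₁ u₂ w₁ w₂ : V, u₁ ∈ F → u₂ ∈ F →
      (graphRestrict G F).Reachable u₁ u₂ →
      w₁ ∉ C ∪ F → w₂ ∉ C ∪ F → G.Adj u₁ w₁ → G.Adj u₂ w₂ →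
      u₁ = u₂ ∧ w₁ = w₂

/-- `(C, F)` is an antler in `G`: a feedback vertex cut with `|C| ≤ fvs(G[C ∪ F])`. -/
def IsAntler (G : SimpleGraph V) (C F : Set V) : Prop :=
  IsFVC G C F ∧ C.ncard ≤ fvs (graphRestrict G (C ∪ F))

/-- A graph `H` together with a vertex set `C` "has order `z`" if every connected
component `H'` of `H` satisfies `fvs(H') = |C ∩ V(H')| ≤ z`. -/
def HasCertOrder {W : Type*} (H : SimpleGraph W) (C : Set W) (z : ℕ) : Prop :=
  ∀ v : W,
    fvs (graphRestrict H {u | H.Reachable u v}) = (C ∩ {u | H.Reachable u v}).ncard ∧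
    (C ∩ {u | H.Reachable u v}).ncard ≤ z

/-- `H` is a `C`-certificate in `G`: a subgraph of `G` for which `C` is a minimum
feedback vertex set. -/
def IsCCertificate (G : SimpleGraph V) (C : Set V) (H : G.Subgraph) : Prop :=
  C ⊆ H.verts ∧ IsMinFVS H.coe {u : H.verts | (u : V) ∈ C}

/-- `H` is a `C`-certificate of order `z` in `G`. -/
def IsCCertificateOfOrder (G : SimpleGraph V) (C : Set V) (H : G.Subgraph) (z : ℕ) : Prop :=
  IsCCertificate G C H ∧ HasCertOrder H.coe {u : H.verts | (u : V) ∈ C} z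

/-- `(C, F)` is a `z`-antler in `G`: an antler such that `G[C ∪ F]` contains a
`C`-certificate of order `z`. -/
def IsZAntler (G : SimpleGraph V) (z : ℕ) (C F : Set V) : Prop :=
  IsAntler G C F ∧ ∃ H : G.Subgraph, H.verts ⊆ C ∪ F ∧ IsCCertificateOfOrder G C H z

/-- The function `f_r(x) = 2x³ + 3x² - x`. -/
def fr (x : ℕ) : ℕ := 2 * x ^ 3 + 3 * x ^ 2 - x

/-- A feedback vertex cut `(C, F)` is reducible if `|F| > f_r(|C|)`. -/
def IsReducibleFVC (G : SimpleGraph V) (C F : Set V) : Prop :=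
  IsFVC G C F ∧ fr C.ncard < F.ncard

/-- A feedback vertex cut `(C, F)` is simple if `|F| ≤ 2 f_r(|C|)` and either
`G[F]` is connected, or all trees of `G[F]` have a common neighbor `v` and there is a
single-tree feedback vertex cut `(C, F₂)` with `v ∈ F₂ \ F` and `F ⊆ F₂`. -/
def IsSimpleFVC (G : SimpleGraph V) (C F : Set V) : Prop :=
  IsFVC G C F ∧ F.ncard ≤ 2 * fr C.ncard ∧
    ((G.induce F).Connected ∨
      ∃ v : V,
        (∀ u ∈ F, ∃ u' ∈ F, (graphRestrict G F).Reachable u u' ∧ G.Adj u' v) ∧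
        ∃ F₂ : Set V, IsFVC G C F₂ ∧ (G.induce F₂).Connected ∧ v ∈ F₂ \ F ∧ F ⊆ F₂)

/-- `G` contains a `v`-flower of order `k`: `k` cycles whose vertex sets pairwise
intersect exactly in `{v}`. -/
def HasFlower (G : SimpleGraph V) (v : V) (k : ℕ) : Prop :=
  ∃ c : Fin k → G.Walk v v,
    (∀ i, (c i).IsCycle) ∧
    ∀ i j, i ≠ j → {x | x ∈ (c i).support} ∩ {x | x ∈ (c j).support} = {v}

/-- `G` contains `k` pairwise vertex-disjoint cycles. -/
def HasDisjointCycles (G : SimpleGraph V) (k : ℕ) : Prop :=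
  ∃ (b : Fin k → V) (c : ∀ i, G.Walk (b i) (b i)),
    (∀ i, (c i).IsCycle) ∧
    ∀ i j, i ≠ j → Disjoint {x | x ∈ (c i).support} {x | x ∈ (c j).support}

/-- `(C, F)` is a 1-antler in `G` (self-contained definition): `G[F]` is a forest,
every tree of `G[F]` has at most one edge to `V(G) \ (C ∪ F)`, and `G[C ∪ F]`
contains `|C|` pairwise vertex-disjoint cycles. -/
def IsOneAntler (G : SimpleGraph V) (C F : Set V) : Prop :=
  IsFVC G C F ∧ HasDisjointCycles (graphRestrict G (C ∪ F)) C.ncard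

/-- `C 1, F 1, …, C ℓ, F ℓ` is a `z`-antler-sequence for `G`: the sets are pairwise
disjoint and each `(C i, F i)` is a `z`-antler in `G` minus all earlier sets. -/
def IsAntlerSeq (G : SimpleGraph V) (z ℓ : ℕ) (C F : Fin ℓ → Set V) : Prop :=
  (∀ i j, i ≠ j → Disjoint (C i) (C j)) ∧
  (∀ i j, i ≠ j → Disjoint (F i) (F j)) ∧
  (∀ i j, Disjoint (C i) (F j)) ∧
  ∀ i, IsZAntler (graphRestrict G (⋃ j, ⋃ (_ : j < i), (C j ∪ F j))ᶜ) z (C i) (F i)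

/-!
Deleting `X ⊆ C` is compatible with every ingredient of a `z`-antler. The forest `F` and its
single outgoing edges are untouched, and `fvs G[C ∪ F] ≤ fvs (G[C ∪ F] - X) + |X|` keeps the
antler inequality. For a certificate `H`, any FVS `Y` of `H - X` yields the FVS `X ∪ Y` of `H`,
so `C \ X` is a minimum FVS of `H - X`. A minimum FVS meets every union of components in a
minimum FVS of that part, which gives `fvs = |(C \ X) ∩ V(H')|` on each component `H'` of
`H - X`; and `H'` lies inside a component of `H`, which bounds that number by `z`.
-/

open SimpleGraph

lemma graphRestrict_graphRestrict (G : SimpleGraph V) (S T : Set V) :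
    graphRestrict (graphRestrict G S) T = graphRestrict G (S ∩ T) := by
  ext u v
  simp only [graphRestrict, Set.mem_inter_iff]
  tauto

lemma graphRestrict_mono (G : SimpleGraph V) {S T : Set V} (h : S ⊆ T) :
    graphRestrict G S ≤ graphRestrict G T :=
  fun _ _ huv => ⟨huv.1, h huv.2.1, h huv.2.2⟩

lemma isAcyclic_of_isAcyclic_induce {G : SimpleGraph V} {s : Set V}
    (h : (G.induce s).IsAcyclic) (hs : G.support ⊆ s) : G.IsAcyclic := by
  intro u p hp
  have hsupp : ∀ x ∈ p.support, x ∈ s := by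
    intro x hx
    obtain ⟨e, he, hxe⟩ := (Walk.mem_support_iff_exists_mem_edges_of_not_nil hp.not_nil).1 hx
    obtain ⟨y, rfl⟩ := Sym2.mem_iff_exists.1 hxe
    exact hs ⟨y, p.adj_of_mem_edges he⟩
  let ι := Embedding.induce (G := G) s
  refine h (p.induce s hsupp)
    ((Walk.isCycle_map_iff_of_injective (f := ι.toHom) ι.injective).1 ?_)
  rwa [Walk.map_induce]

lemma SimpleGraph.Walk.support_subset_of_adj_closed {G : SimpleGraph V} {S : Set V}
    (hS : ∀ u w, G.Adj u w → u ∈ S → w ∈ S) {u v : V} (p : G.Walk u v) (hu : u ∈ S) :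
    ∀ x ∈ p.support, x ∈ S := by
  induction p with
  | nil => simpa using hu
  | cons h p ih =>
    intro x hx
    rw [Walk.support_cons, List.mem_cons] at hx
    rcases hx with rfl | hx
    · exact hu
    · exact ih (hS _ _ h hu) x hx

lemma not_isCycle_of_adj_closed {G : SimpleGraph V} {S : Set V}
    (hS : ∀ u w, G.Adj u w → u ∈ S → w ∈ S) (h : (graphRestrict G S).IsAcyclic)
    {u : V} (hu : u ∈ S) (p : G.Walk u u) : ¬ p.IsCycle := by
  intro hp
  have hsupp := Walk.support_subset_of_adj_closed hS p hu
  refine h _ (hp.transfer (H := graphRestrict G S) ?_)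
  intro e he
  induction e using Sym2.ind with
  | _ x y =>
    exact ⟨p.adj_of_mem_edges he, hsupp x (p.fst_mem_support_of_mem_edges he),
      hsupp y (p.snd_mem_support_of_mem_edges he)⟩

/-- A set closed under adjacency is a union of connected components, so every cycle lies on
one side of it. -/
lemma isAcyclic_of_adj_closed {G : SimpleGraph V} {S : Set V}
    (hS : ∀ u w, G.Adj u w → u ∈ S → w ∈ S) (h₁ : (graphRestrict G S).IsAcyclic)
    (h₂ : (graphRestrict G Sᶜ).IsAcyclic) : G.IsAcyclic := by
  intro u p
  by_cases hu : u ∈ S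
  · exact not_isCycle_of_adj_closed hS h₁ hu p
  · have hSc : ∀ u w, G.Adj u w → u ∈ Sᶜ → w ∈ Sᶜ :=
      fun u w huw hu hw => hu (hS w u huw.symm hw)
    exact not_isCycle_of_adj_closed hSc h₂ hu p

lemma isFVS_univ (G : SimpleGraph V) : IsFVS G Set.univ :=
  isAcyclic_bot.anti fun u _ huv => (huv.2.1 (Set.mem_univ u)).elim

lemma fvs_le {G : SimpleGraph V} {X : Set V} (h : IsFVS G X) : fvs G ≤ X.ncard :=
  Nat.sInf_le ⟨X, h, rfl⟩

lemma exists_isFVS_ncard_eq_fvs (G : SimpleGraph V) : ∃ X, IsFVS G X ∧ X.ncard = fvs G :=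
  Nat.sInf_mem (s := {n | ∃ X : Set V, IsFVS G X ∧ X.ncard = n})
    ⟨_, Set.univ, isFVS_univ G, rfl⟩

lemma isFVS_graphRestrict_compl_iff {G : SimpleGraph V} {X Y : Set V} :
    IsFVS (graphRestrict G Xᶜ) Y ↔ IsFVS G (X ∪ Y) := by
  rw [IsFVS, IsFVS, graphRestrict_graphRestrict, Set.compl_union]

lemma fvs_le_fvs_graphRestrict_compl_add [Finite V] (G : SimpleGraph V) (X : Set V) :
    fvs G ≤ fvs (graphRestrict G Xᶜ) + X.ncard := by
  obtain ⟨Y, hY, hcard⟩ := exists_isFVS_ncard_eq_fvs (graphRestrict G Xᶜ)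
  calc fvs G ≤ (X ∪ Y).ncard := fvs_le (isFVS_graphRestrict_compl_iff.1 hY)
    _ ≤ X.ncard + Y.ncard := Set.ncard_union_le X Y
    _ = fvs (graphRestrict G Xᶜ) + X.ncard := by rw [hcard, add_comm]

lemma IsMinFVS.graphRestrict_compl [Finite V] {G : SimpleGraph V} {D X : Set V}
    (hD : IsMinFVS G D) (hX : X ⊆ D) : IsMinFVS (graphRestrict G Xᶜ) (D \ X) := by
  refine ⟨isFVS_graphRestrict_compl_iff.2 ?_, fun Y hY => ?_⟩
  · rw [Set.union_sdiff_cancel hX]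
    exact hD.1
  · have hXY := hD.2 _ (isFVS_graphRestrict_compl_iff.1 hY)
    have hsplit := Set.ncard_sdiff_add_ncard_of_subset hX
    have hunion := Set.ncard_union_le X Y
    omega

/-- Exchanging the part of `D` inside `R` for a smaller FVS of `G[R]` would give a smaller
FVS of `G`. -/
lemma IsMinFVS.fvs_graphRestrict_of_adj_closed [Finite V] {G : SimpleGraph V} {D R : Set V}
    (hD : IsMinFVS G D) (hR : ∀ u w, G.Adj u w → u ∈ R → w ∈ R) :
    fvs (graphRestrict G R) = (D ∩ R).ncard := by
  refine le_antisymm (fvs_le ?_) ?_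
  · refine hD.1.anti ?_
    rw [graphRestrict_graphRestrict]
    exact graphRestrict_mono G fun x hx hxD => hx.2 ⟨hxD, hx.1⟩
  obtain ⟨Y, hY, hcard⟩ := exists_isFVS_ncard_eq_fvs (graphRestrict G R)
  have hFVS : IsFVS G ((D \ R) ∪ Y) := by
    refine isAcyclic_of_adj_closed (fun u w huw hu => hR u w huw.1 hu) ?_ ?_
    · refine hY.anti ?_
      rw [graphRestrict_graphRestrict, graphRestrict_graphRestrict]
      exact graphRestrict_mono G fun x hx => ⟨hx.2, fun hxY => hx.1 (Or.inr hxY)⟩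
    · refine hD.1.anti ?_
      rw [graphRestrict_graphRestrict]
      exact graphRestrict_mono G fun x hx hxD => hx.1 (Or.inl ⟨hxD, hx.2⟩)
  have hDY := hD.2 _ hFVS
  have hsplit := Set.ncard_inter_add_ncard_sdiff_eq_ncard D R
  have hunion := Set.ncard_union_le (D \ R) Y
  omega

lemma IsFVC.graphRestrict_compl {G : SimpleGraph V} {C F : Set V} (h : IsFVC G C F)
    (X : Set V) : IsFVC (graphRestrict G Xᶜ) (C \ X) F := by
  obtain ⟨hdisj, hforest, htree⟩ := h
  have hle : graphRestrict (graphRestrict G Xᶜ) F ≤ graphRestrict G F := by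
    rw [graphRestrict_graphRestrict]
    exact graphRestrict_mono G Set.inter_subset_right
  have hout : ∀ u w, (graphRestrict G Xᶜ).Adj u w → w ∉ (C \ X) ∪ F → w ∉ C ∪ F :=
    fun u w huw hw hCF => hw (hCF.imp (fun hC => ⟨hC, huw.2.2⟩) id)
  refine ⟨hdisj.mono_left Set.sdiff_subset, hforest.anti hle, ?_⟩
  intro u₁ u₂ w₁ w₂ hu₁ hu₂ hreach hw₁ hw₂ h₁ h₂
  exact htree u₁ u₂ w₁ w₂ hu₁ hu₂ (hreach.mono hle) (hout _ _ h₁ hw₁) (hout _ _ h₂ hw₂)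
    h₁.1 h₂.1

lemma IsAntler.graphRestrict_compl [Finite V] {G : SimpleGraph V} {C F : Set V}
    (h : IsAntler G C F) {X : Set V} (hX : X ⊆ C) :
    IsAntler (graphRestrict G Xᶜ) (C \ X) F := by
  refine ⟨h.1.graphRestrict_compl X, ?_⟩
  have hsets : Xᶜ ∩ ((C \ X) ∪ F) = (C ∪ F) ∩ Xᶜ := by
    ext x
    simp only [Set.mem_inter_iff, Set.mem_compl_iff, Set.mem_union, Set.mem_sdiff]
    tauto
  have hfvs := fvs_le_fvs_graphRestrict_compl_add (graphRestrict G (C ∪ F)) X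
  rw [graphRestrict_graphRestrict] at hfvs
  rw [graphRestrict_graphRestrict, hsets]
  have hsplit := Set.ncard_sdiff_add_ncard_of_subset hX
  have hC := h.2
  omega

section Certificate

variable {G : SimpleGraph V}

def SimpleGraph.Subgraph.restrictCompl (H : G.Subgraph) (X : Set V) :
    (graphRestrict G Xᶜ).Subgraph where
  verts := H.verts \ X
  Adj u v := H.Adj u v ∧ u ∉ X ∧ v ∉ X
  adj_sub h := ⟨H.adj_sub h.1, h.2.1, h.2.2⟩
  edge_vert h := ⟨H.edge_vert h.1, h.2.1⟩
  symm := ⟨fun _ _ h => ⟨H.adj_symm h.1, h.2.2, h.2.1⟩⟩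

namespace SimpleGraph.Subgraph

lemma spanningCoe_restrictCompl (H : G.Subgraph) (X : Set V) :
    (H.restrictCompl X).spanningCoe = graphRestrict H.spanningCoe Xᶜ :=
  rfl

lemma isFVS_coe_iff (H : G.Subgraph) (S : Set V) :
    IsFVS H.coe (Subtype.val ⁻¹' S) ↔ IsFVS H.spanningCoe S := by
  have hinduce : graphRestrict H.coe (Subtype.val ⁻¹' S)ᶜ =
      (graphRestrict H.spanningCoe Sᶜ).induce H.verts :=
    rfl
  rw [IsFVS, IsFVS, hinduce]
  refine ⟨fun h => isAcyclic_of_isAcyclic_induce h ?_, fun h => h.induce _⟩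
  rintro u ⟨w, huw⟩
  exact H.edge_vert huw.1

lemma isMinFVS_coe_iff [Finite V] (H : G.Subgraph) {C : Set V} (hC : C ⊆ H.verts) :
    IsMinFVS H.coe (Subtype.val ⁻¹' C) ↔ IsMinFVS H.spanningCoe C := by
  have hcard : (Subtype.val ⁻¹' C : Set H.verts).ncard = C.ncard :=
    Set.ncard_preimage_of_injective_subset_range Subtype.val_injective
      (by rwa [Subtype.range_val])
  rw [IsMinFVS, IsMinFVS, H.isFVS_coe_iff, hcard]
  refine and_congr_right fun _ => ⟨fun hmin Y hY => ?_, fun hmin Y hY => ?_⟩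
  · calc C.ncard ≤ (Subtype.val ⁻¹' Y : Set H.verts).ncard :=
          hmin _ ((H.isFVS_coe_iff Y).2 hY)
      _ ≤ Y.ncard :=
        Set.ncard_le_ncard_of_injOn Subtype.val (fun _ h => h) Subtype.val_injective.injOn
  · have hY' : IsFVS H.spanningCoe (Subtype.val '' Y) := by
      rwa [← H.isFVS_coe_iff, Set.preimage_image_eq _ Subtype.val_injective]
    calc C.ncard ≤ (Subtype.val '' Y).ncard := hmin _ hY'
      _ = Y.ncard := Set.ncard_image_of_injective Y Subtype.val_injective

lemma ncard_inter_reachable_restrictCompl_le [Finite V] (H : G.Subgraph) (C X : Set V)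
    (v : (H.restrictCompl X).verts) :
    (Subtype.val ⁻¹' (C \ X) ∩ {u | (H.restrictCompl X).coe.Reachable u v}).ncard ≤
      (Subtype.val ⁻¹' C ∩ {u | H.coe.Reachable u ⟨v, v.2.1⟩}).ncard := by
  let ι : (H.restrictCompl X).coe →g H.coe := ⟨fun u => ⟨u, u.2.1⟩, fun h => h.1⟩
  refine Set.ncard_le_ncard_of_injOn ι (fun u hu => ⟨hu.1.1, hu.2.map ι⟩) ?_
  exact fun a _ b _ hab => Subtype.ext (congrArg (fun u : H.verts => (u : V)) hab)

end SimpleGraph.Subgraph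

lemma IsCCertificate.restrictCompl [Finite V] {C X : Set V} {H : G.Subgraph}
    (h : IsCCertificate G C H) (hX : X ⊆ C) :
    IsCCertificate (graphRestrict G Xᶜ) (C \ X) (H.restrictCompl X) := by
  obtain ⟨hCH, hmin⟩ := h
  have hCX : C \ X ⊆ (H.restrictCompl X).verts := Set.sdiff_subset_sdiff_left hCH
  refine ⟨hCX, ((H.restrictCompl X).isMinFVS_coe_iff hCX).2 ?_⟩
  rw [Subgraph.spanningCoe_restrictCompl]
  exact ((H.isMinFVS_coe_iff hCH).1 hmin).graphRestrict_compl hX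

lemma IsCCertificateOfOrder.restrictCompl [Finite V] {C X : Set V} {H : G.Subgraph} {z : ℕ}
    (h : IsCCertificateOfOrder G C H z) (hX : X ⊆ C) :
    IsCCertificateOfOrder (graphRestrict G Xᶜ) (C \ X) (H.restrictCompl X) z := by
  have hcert := h.1.restrictCompl hX
  refine ⟨hcert, fun v => ⟨?_, ?_⟩⟩
  · exact hcert.2.fvs_graphRestrict_of_adj_closed fun u w huw hu => huw.symm.reachable.trans hu
  · exact (H.ncard_inter_reachable_restrictCompl_le C X v).trans (h.2 _).2

end Certificate

theorem stmt3 [Fintype V] (G : SimpleGraph V) (z : ℕ) (C F X : Set V)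
    (h : IsZAntler G z C F) (hX : X ⊆ C) :
    IsZAntler (graphRestrict G Xᶜ) z (C \ X) F := by
  obtain ⟨hantler, H, hHCF, hH⟩ := h
  refine ⟨hantler.graphRestrict_compl hX, H.restrictCompl X, ?_, hH.restrictCompl hX⟩
  rintro u ⟨hu, huX⟩
  exact (hHCF hu).imp (fun hC => ⟨hC, huX⟩) id
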